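/- Let p : Ñ → N be a covering map with Ñ connected whose fibers have finite cardinality d, let f : M → N be continuous, let f̃ : M → Ñ be a lifting of f (p ∘ f̃ = f), let * ∈ N and *̃ ∈ p⁻¹({*}). Then MC(f, *) ≥ d · MC(f̃, *̃), where MC(f, *) and MC(f̃, *̃) denote the minimum numbers of coincidence points of f with the constant map at * and of f̃ with the constant map at *̃, respectively. (Inequality from Remark 1.16.) -/

import Mathlib

open scoped Manifold ContinuousMap unitInterval Topology
open CategoryTheory

universe u v

/-- The minimum number of coincidence points, over all pairs of maps homotopic to the
given pair, as a value in `ℕ ∪ {∞}`. -/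
noncomputable def MC {M : Type u} {N : Type v} [TopologicalSpace M] [TopologicalSpace N]
    (f₁ f₂ : C(M, N)) : ℕ∞ :=
  sInf {k : ℕ∞ | ∃ g₁ g₂ : C(M, N), g₁.Homotopic f₁ ∧ g₂.Homotopic f₂ ∧
    k = ({x | g₁ x = g₂ x} : Set M).encard}

/-- The minimum number of path components of the coincidence set, over all pairs of maps
homotopic to the given pair, as a value in `ℕ ∪ {∞}`. -/
noncomputable def MCC {M : Type u} {N : Type v} [TopologicalSpace M] [TopologicalSpace N]
    (f₁ f₂ : C(M, N)) : ℕ∞ :=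
  sInf {k : ℕ∞ | ∃ g₁ g₂ : C(M, N), g₁.Homotopic f₁ ∧ g₂.Homotopic f₂ ∧
    k = ENat.card (ZerothHomotopy {x : M // g₁ x = g₂ x})}

/-- A pair of maps is loose if they can be deformed away from one another,
i.e. they are homotopic to a coincidence free pair. -/
def Loose {M : Type u} {N : Type v} [TopologicalSpace M] [TopologicalSpace N]
    (f₁ f₂ : C(M, N)) : Prop :=
  ∃ g₁ g₂ : C(M, N), g₁.Homotopic f₁ ∧ g₂.Homotopic f₂ ∧ ∀ x : M, g₁ x ≠ g₂ x

/-- The path space `E(f₁, f₂) = {(x, θ) ∈ M × P(N) | θ(0) = f₁(x), θ(1) = f₂(x)}`,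
where `P(N)` carries the compact-open topology. -/
abbrev ESpace {M : Type u} {N : Type v} [TopologicalSpace M] [TopologicalSpace N]
    (f₁ f₂ : C(M, N)) : Type _ :=
  {p : M × C(unitInterval, N) // p.2 0 = f₁ p.1 ∧ p.2 1 = f₂ p.1}

/-- The path space `E(g, y) = {(x, θ) ∈ M × P(Y) | θ(0) = g(x), θ(1) = y}`. -/
abbrev EBase {M : Type u} {Y : Type v} [TopologicalSpace M] [TopologicalSpace Y]
    (g : C(M, Y)) (y : Y) : Type _ :=
  {p : M × C(unitInterval, Y) // p.2 0 = g p.1 ∧ p.2 1 = y}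

/-- The unit sphere `S^k ⊆ ℝ^(k+1)`. -/
abbrev Sph (k : ℕ) : Type := Metric.sphere (0 : EuclideanSpace ℝ (Fin (k + 1))) 1

/-- The homomorphism induced by a continuous map on fundamental groups. -/
noncomputable def π₁map {X Y : Type u} [TopologicalSpace X] [TopologicalSpace Y]
    (f : C(X, Y)) (x : X) :
    Aut (FundamentalGroupoid.mk x) →* Aut (FundamentalGroupoid.mk (f x)) :=
  CategoryTheory.Functor.mapAut (⟨x⟩ : FundamentalGroupoid X)
    (show FundamentalGroupoid X ⥤ FundamentalGroupoid Y from
      FundamentalGroupoid.fundamentalGroupoidFunctor.map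
        (show TopCat.of X ⟶ TopCat.of Y from TopCat.ofHom f))

/-!
Lift the homotopy `f ≃ g₁` to a homotopy `f̃ ≃ g̃₁`, and lift the homotopy `* ≃ g₂` once from
each of the `d` points `e` of the fibre over `*`, getting maps `g̃₂ₑ` homotopic to `*̃`
(`Ñ` is connected and, covering a manifold, locally path-connected, hence path-connected).
A coincidence of `g̃₁` with `g̃₂ₑ` lies over a coincidence of `g₁` with `g₂`, and by uniqueness
of path lifting no point of `M` is a coincidence of `g̃₁` with two different `g̃₂ₑ`. So `g₁, g₂`
have at least `d` disjoint sets of coincidences, each of size at least `MC(f̃, *̃)`.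
-/

open ContinuousMap Function

theorem IsLocalHomeomorph.locallyPathConnectedSpace {X Y : Type*} [TopologicalSpace X]
    [TopologicalSpace Y] [LocallyPathConnectedSpace Y] {f : X → Y} (hf : IsLocalHomeomorph f) :
    LocallyPathConnectedSpace X :=
  letI : ChartedSpace Y X :=
    { atlas := Set.range fun x ↦ (hf x).choose
      chartAt := fun x ↦ (hf x).choose
      mem_chart_source := fun x ↦ (hf x).choose_spec.1
      chart_mem_atlas := fun x ↦ ⟨x, rfl⟩ }
  ChartedSpace.locallyPathConnectedSpace Y X

theorem Set.natCard_mul_le_encard_iUnion {ι α : Type*} [Finite ι] {s : ι → Set α}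
    (hs : Pairwise (Disjoint on s)) {μ : ℕ∞} (hμ : ∀ i, μ ≤ (s i).encard) :
    (Nat.card ι : ℕ∞) * μ ≤ (⋃ i, s i).encard := by
  have := Fintype.ofFinite ι
  rw [Set.encard_iUnion_of_finite hs, finsum_eq_sum_of_fintype, Nat.card_eq_fintype_card,
    ← nsmul_eq_mul, ← Finset.card_univ]
  exact Finset.card_nsmul_le_sum _ _ _ fun i _ ↦ hμ i

namespace IsCoveringMap

variable {E X A : Type*} [TopologicalSpace E] [TopologicalSpace X] [TopologicalSpace A]
  {p : E → X} (cov : IsCoveringMap p) {f₀ f₁ : C(A, X)}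

noncomputable def liftHomotopyEnd (F : f₀.Homotopy f₁) (f₀' : C(A, E))
    (h₀ : ∀ a, F (0, a) = p (f₀' a)) : C(A, E) :=
  (cov.liftHomotopy F.toContinuousMap f₀' h₀).curry 1

variable {F : f₀.Homotopy f₁}

theorem homotopic_liftHomotopyEnd (f₀' : C(A, E)) (h₀ : ∀ a, F (0, a) = p (f₀' a)) :
    f₀'.Homotopic (cov.liftHomotopyEnd F f₀' h₀) :=
  ⟨{ toContinuousMap := cov.liftHomotopy F.toContinuousMap f₀' h₀
     map_zero_left := cov.liftHomotopy_zero _ _ _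
     map_one_left := fun _ ↦ rfl }⟩

theorem comp_liftHomotopyEnd (f₀' : C(A, E)) (h₀ : ∀ a, F (0, a) = p (f₀' a)) :
    p ∘ cov.liftHomotopyEnd F f₀' h₀ = f₁ :=
  funext fun a ↦ (congrFun (cov.liftHomotopy_lifts _ _ h₀) (1, a)).trans (F.apply_one a)

theorem apply_eq_of_liftHomotopyEnd_apply_eq {f₀' f₀'' : C(A, E)}
    (h₀ : ∀ a, F (0, a) = p (f₀' a)) (h₀' : ∀ a, F (0, a) = p (f₀'' a)) {a : A}
    (h : cov.liftHomotopyEnd F f₀' h₀ a = cov.liftHomotopyEnd F f₀'' h₀' a) : f₀' a = f₀'' a := by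
  set L := cov.liftHomotopy F.toContinuousMap f₀' h₀
  set L' := cov.liftHomotopy F.toContinuousMap f₀'' h₀'
  have lifts_same_path : p ∘ (fun t ↦ L (t, a)) = p ∘ (fun t ↦ L' (t, a)) := by
    ext t
    exact (congrFun (cov.liftHomotopy_lifts _ _ h₀) (t, a)).trans
      (congrFun (cov.liftHomotopy_lifts _ _ h₀') (t, a)).symm
  have := cov.eq_of_comp_eq (by fun_prop) (by fun_prop) lifts_same_path 1 h
  rw [← cov.liftHomotopy_zero _ _ h₀ a, ← cov.liftHomotopy_zero _ _ h₀' a]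
  exact congrFun this 0

end IsCoveringMap

variable {m n : ℕ}
variable {M : Type u} [TopologicalSpace M] [ChartedSpace (EuclideanSpace ℝ (Fin m)) M]
  [IsManifold (𝓡 m) ((⊤ : ℕ∞) : WithTop ℕ∞) M] [CompactSpace M] [ConnectedSpace M]
variable {N : Type u} [TopologicalSpace N] [ChartedSpace (EuclideanSpace ℝ (Fin n)) N]
  [IsManifold (𝓡 n) ((⊤ : ℕ∞) : WithTop ℕ∞) N] [ConnectedSpace N]

theorem MC_root_ge_card_mul_MC_lift_general {Ntil : Type u} [TopologicalSpace Ntil]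
    [ConnectedSpace Ntil] (hn : 1 ≤ n)
    (p : Ntil → N) (hcov : IsCoveringMap p) (d : ℕ)
    (hfib : ∀ y : N, Finite (p ⁻¹' {y}) ∧ Nat.card (p ⁻¹' {y}) = d)
    (f : C(M, N)) (ftil : C(M, Ntil)) (hlift : ∀ x : M, p (ftil x) = f x)
    (y : N) (ytil : Ntil) :
    (d : ℕ∞) * MC ftil (ContinuousMap.const M ytil) ≤ MC f (ContinuousMap.const M y) := by
  have := ChartedSpace.locallyPathConnectedSpace (EuclideanSpace ℝ (Fin n)) (M := N)
  have := hcov.isLocalHomeomorph.locallyPathConnectedSpace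
  have := PathConnectedSpace.of_locallyPathConnectedSpace (X := Ntil)
  have := (hfib y).1
  refine le_sInf ?_
  rintro _ ⟨g₁, g₂, ⟨F₁⟩, ⟨F₂⟩, rfl⟩
  let g₁' := hcov.liftHomotopyEnd F₁.symm ftil fun x ↦ by simp [hlift]
  let g₂' (e : p ⁻¹' {y}) :=
    hcov.liftHomotopyEnd F₂.symm (const M e.1) fun _ ↦ by simpa using e.2.symm
  calc (d : ℕ∞) * MC ftil (const M ytil)
      = Nat.card (p ⁻¹' {y}) * MC ftil (const M ytil) := by rw [(hfib y).2]
    _ ≤ (⋃ e, {x | g₁' x = g₂' e x}).encard := by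
        refine Set.natCard_mul_le_encard_iUnion ?_
          fun e ↦ sInf_le ⟨g₁', g₂' e, ?_, ?_, rfl⟩
        · refine fun e e' hne ↦ Set.disjoint_left.2 fun x hx hx' ↦ hne (Subtype.ext ?_)
          exact hcov.apply_eq_of_liftHomotopyEnd_apply_eq _ _ (hx.symm.trans hx') (a := x)
        · exact (hcov.homotopic_liftHomotopyEnd _ _).symm
        · exact (hcov.homotopic_liftHomotopyEnd _ _).symm.trans
            ⟨(PathConnectedSpace.somePath _ _).toHomotopyConst⟩
    _ ≤ {x | g₁ x = g₂ x}.encard := by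
        refine Set.encard_le_encard (Set.iUnion_subset fun e x (hx : g₁' x = g₂' e x) ↦ ?_)
        calc g₁ x = p (g₁' x) := (congrFun (hcov.comp_liftHomotopyEnd _ _) x).symm
          _ = p (g₂' e x) := congrArg p hx
          _ = g₂ x := congrFun (hcov.comp_liftHomotopyEnd _ _) x

/-- Remark 1.16 (root case inequality): for a `d`-fold covering `p : Ñ → N` and a lifting
`f̃` of `f`, one has `MC(f,*) ≥ d · MC(f̃,*̃)`. -/
theorem MC_root_ge_card_mul_MC_lift {Ntil : Type u} [TopologicalSpace Ntil]
    [ConnectedSpace Ntil] (hm : 1 ≤ m) (hn : 1 ≤ n)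
    (p : Ntil → N) (hcov : IsCoveringMap p) (d : ℕ)
    (hfib : ∀ y : N, Finite (p ⁻¹' {y}) ∧ Nat.card (p ⁻¹' {y}) = d)
    (f : C(M, N)) (ftil : C(M, Ntil)) (hlift : ∀ x : M, p (ftil x) = f x)
    (y : N) (ytil : Ntil) (hy : p ytil = y) :
    (d : ℕ∞) * MC ftil (ContinuousMap.const M ytil) ≤ MC f (ContinuousMap.const M y) :=
  MC_root_ge_card_mul_MC_lift_general hn p hcov d hfib f ftil hlift y ytil
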